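/- (Safe screening preserves the optimum) Fix γ ∈ (0,1], λ > 0, a finite index set T, and symmetric matrices H_t ∈ ℝ^{d×d} (t ∈ T). Let M* be optimal for λ, i.e., M* ⪰ O and P_λ(M*) ≤ P_λ(M) for all M ⪰ O. Let L̂ ⊆ {t ∈ T : ⟨M*, H_t⟩ < 1−γ} and R̂ ⊆ {t ∈ T : ⟨M*, H_t⟩ > 1}, and define the reduced objective P̃_λ(M) := Σ_{t ∈ T∖(L̂∪R̂)} ℓ_γ(⟨M, H_t⟩) + (λ/2)‖M‖_F² + (1 − γ/2)|L̂| − ⟨M, Σ_{t ∈ L̂} H_t⟩. Then M* also minimizes P̃_λ over positive semi-definite matrices, and P̃_λ(M*) = P_λ(M*). -/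

import Mathlib

open scoped BigOperators
open scoped Matrix

/-- Frobenius inner product ⟨A,B⟩ = tr(Aᵀ B). -/
noncomputable def frob {d : ℕ} (A B : Matrix (Fin d) (Fin d) ℝ) : ℝ :=
  Matrix.trace (Aᵀ * B)

/-- Frobenius norm ‖A‖_F = √⟨A,A⟩. -/
noncomputable def frobNorm {d : ℕ} (A : Matrix (Fin d) (Fin d) ℝ) : ℝ :=
  Real.sqrt (frob A A)

/-- Smoothed hinge loss ℓ_γ. -/
noncomputable def shinge (γ x : ℝ) : ℝ :=
  if 1 < x then 0 else if 1 - γ ≤ x then (1 - x) ^ 2 / (2 * γ) else 1 - x - γ / 2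

/-- Derivative of the smoothed hinge loss ℓ_γ'. -/
noncomputable def shinge' (γ x : ℝ) : ℝ :=
  if 1 < x then 0 else if 1 - γ ≤ x then -(1 - x) / γ else -1

/-- Primal objective P_λ(M) = Σ_t ℓ_γ(⟨M,H_t⟩) + (λ/2)‖M‖_F². -/
noncomputable def Pobj {d : ℕ} {ι : Type*} (γ lam : ℝ) (T : Finset ι)
    (H : ι → Matrix (Fin d) (Fin d) ℝ) (M : Matrix (Fin d) (Fin d) ℝ) : ℝ :=
  (∑ t ∈ T, shinge γ (frob M (H t))) + lam / 2 * frobNorm M ^ 2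

/-- Gradient ∇P_λ(M) = Σ_t ℓ_γ'(⟨M,H_t⟩) H_t + λ M. -/
noncomputable def gradP {d : ℕ} {ι : Type*} (γ lam : ℝ) (T : Finset ι)
    (H : ι → Matrix (Fin d) (Fin d) ℝ) (M : Matrix (Fin d) (Fin d) ℝ) :
    Matrix (Fin d) (Fin d) ℝ :=
  (∑ t ∈ T, shinge' γ (frob M (H t)) • H t) + lam • M

/-!
The reduced objective `P̃_λ` is convex, and it coincides with `P_λ` on the open set of matrices
`M` with `⟨M, H_t⟩ < 1 - γ` on `L̂` and `⟨M, H_t⟩ > 1` on `R̂`, where `ℓ_γ` is affine resp. zero.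
This set contains `M*`, so `M*` is a local, hence global, minimiser of `P̃_λ` on the convex cone
of positive semi-definite matrices.
-/

open Filter Set Topology

section Convexity

variable {𝕜 E β ι : Type*} [Semiring 𝕜] [PartialOrder 𝕜] [AddCommMonoid E] [SMul 𝕜 E]
  [AddCommMonoid β] [PartialOrder β] [IsOrderedAddMonoid β] [Module 𝕜 β]

theorem convexOn_finset_sum {s : Set E} (hs : Convex 𝕜 s) {t : Finset ι} {f : ι → E → β}
    (hf : ∀ i ∈ t, ConvexOn 𝕜 s (f i)) : ConvexOn 𝕜 s fun x => ∑ i ∈ t, f i x := by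
  classical
  induction t using Finset.induction_on with
  | empty => simpa using convexOn_const (0 : β) hs
  | insert i t hi ih =>
    simp only [Finset.sum_insert hi]
    exact (hf i (t.mem_insert_self i)).add (ih fun j hj => hf j (Finset.mem_insert_of_mem hj))

end Convexity

theorem IsMinOn.of_eventuallyEq_of_convexOn {E β : Type*} [AddCommGroup E] [TopologicalSpace E]
    [Module ℝ E] [IsTopologicalAddGroup E] [ContinuousSMul ℝ E] [AddCommGroup β] [PartialOrder β]
    [IsOrderedAddMonoid β] [Module ℝ β] [IsOrderedModule ℝ β] [PosSMulReflectLE ℝ β]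
    {s : Set E} {f g : E → β} {a : E} (ha : a ∈ s) (hf : IsMinOn f s a) (hfg : f =ᶠ[𝓝 a] g)
    (hg : ConvexOn ℝ s g) : IsMinOn g s a :=
  .of_isLocalMinOn_of_convexOn ha (hf.localize.congr (nhdsWithin_le_nhds hfg) ha) hg

theorem convex_setOf_posSemidef {n : Type*} [Fintype n] :
    Convex ℝ {M : Matrix n n ℝ | M.PosSemidef} :=
  fun _ hA _ hB _ _ ha hb _ => (hA.smul ha).add (hB.smul hb)

section Frobenius

variable {d : ℕ}

noncomputable def frobₗ (B : Matrix (Fin d) (Fin d) ℝ) : Matrix (Fin d) (Fin d) ℝ →ₗ[ℝ] ℝ where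
  toFun A := frob A B
  map_add' _ _ := by simp [frob, Matrix.add_mul]
  map_smul' _ _ := by simp [frob]

theorem continuous_frob_left (B : Matrix (Fin d) (Fin d) ℝ) : Continuous fun A => frob A B :=
  (frobₗ B).continuous_of_finiteDimensional

theorem frob_sum_right {ι : Type*} (A : Matrix (Fin d) (Fin d) ℝ) (s : Finset ι)
    (B : ι → Matrix (Fin d) (Fin d) ℝ) : frob A (∑ t ∈ s, B t) = ∑ t ∈ s, frob A (B t) := by
  simp [frob, Matrix.mul_sum, Matrix.trace_sum]

theorem frob_self_eq_sum_sq (A : Matrix (Fin d) (Fin d) ℝ) :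
    frob A A = ∑ i, ∑ j, A j i ^ 2 := by
  simp [frob, Matrix.trace, Matrix.mul_apply, sq]

theorem frobNorm_sq (A : Matrix (Fin d) (Fin d) ℝ) : frobNorm A ^ 2 = frob A A :=
  Real.sq_sqrt (by rw [frob_self_eq_sum_sq]; positivity)

theorem convexOn_frobNorm_sq :
    ConvexOn ℝ univ fun A : Matrix (Fin d) (Fin d) ℝ => frobNorm A ^ 2 := by
  simp only [frobNorm_sq, frob_self_eq_sum_sq]
  refine convexOn_finset_sum convex_univ fun i _ => convexOn_finset_sum convex_univ fun j _ => ?_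
  exact (Even.convexOn_pow (𝕜 := ℝ) even_two).comp_linearMap (Matrix.entryLinearMap ℝ ℝ j i)

end Frobenius

section SmoothedHinge

variable {γ : ℝ}

theorem neg_shinge'_mem_Icc (hγ : 0 < γ) (x : ℝ) : -shinge' γ x ∈ Icc (0 : ℝ) 1 := by
  unfold shinge'
  split_ifs with h₁ h₂
  · simp
  · rw [neg_div, neg_neg, mem_Icc, div_le_one hγ]
    exact ⟨div_nonneg (by linarith) hγ.le, by linarith⟩
  · simp

theorem shinge_eq_dual (hγ : γ ≠ 0) (x : ℝ) :
    shinge γ x = -shinge' γ x * (1 - x) - γ * (-shinge' γ x) ^ 2 / 2 := by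
  unfold shinge shinge'
  split_ifs
  · simp
  · field_simp
    ring
  · ring

theorem dual_le_shinge (hγ : 0 < γ) {α : ℝ} (hα : α ∈ Icc (0 : ℝ) 1) (x : ℝ) :
    α * (1 - x) - γ * α ^ 2 / 2 ≤ shinge γ x := by
  obtain ⟨hα₀, hα₁⟩ := hα
  unfold shinge
  split_ifs with h₁ h₂
  · nlinarith
  · rw [le_div_iff₀ (by positivity)]
    nlinarith [sq_nonneg (1 - x - γ * α)]
  · nlinarith [mul_nonneg (sub_nonneg.2 hα₁) (sub_nonneg.2 hα₁)]

/-- `ℓ_γ(x) = max_{α ∈ [0,1]} (α (1 - x) - γ α² / 2)`, the maximum being attained at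
`α = -ℓ_γ'(x)`; a supremum of affine functions is convex. -/
theorem convexOn_shinge (hγ : 0 < γ) : ConvexOn ℝ univ (shinge γ) := by
  refine ⟨convex_univ, fun x _ y _ a b ha hb hab => ?_⟩
  simp only [smul_eq_mul]
  have hα := neg_shinge'_mem_Icc hγ (a * x + b * y)
  rw [shinge_eq_dual hγ.ne']
  set α := -shinge' γ (a * x + b * y)
  calc α * (1 - (a * x + b * y)) - γ * α ^ 2 / 2
      = a * (α * (1 - x) - γ * α ^ 2 / 2) + b * (α * (1 - y) - γ * α ^ 2 / 2) := by
        linear_combination (γ * α ^ 2 / 2 - α) * hab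
    _ ≤ a * shinge γ x + b * shinge γ y := by
        gcongr <;> exact dual_le_shinge hγ hα _

theorem shinge_of_lt (hγ : 0 ≤ γ) {x : ℝ} (hx : x < 1 - γ) : shinge γ x = 1 - x - γ / 2 := by
  rw [shinge, if_neg (by linarith), if_neg (by linarith)]

theorem shinge_of_one_lt {x : ℝ} (hx : 1 < x) : shinge γ x = 0 := if_pos hx

theorem sum_shinge_eq_of_screened {ι : Type*} [DecidableEq ι] (hγ : 0 ≤ γ) {T L R : Finset ι}
    (hLT : L ⊆ T) (hRT : R ⊆ T) {x : ι → ℝ} (hL : ∀ t ∈ L, x t < 1 - γ)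
    (hR : ∀ t ∈ R, 1 < x t) :
    ∑ t ∈ T, shinge γ (x t) =
      ∑ t ∈ T \ (L ∪ R), shinge γ (x t) + (1 - γ / 2) * L.card - ∑ t ∈ L, x t := by
  have hLR : Disjoint L R :=
    Finset.disjoint_left.2 fun t htL htR => by linarith [hL t htL, hR t htR]
  rw [← Finset.sum_sdiff (Finset.union_subset hLT hRT), Finset.sum_union hLR,
    Finset.sum_congr rfl fun t ht => shinge_of_lt hγ (hL t ht),
    Finset.sum_eq_zero fun t ht => shinge_of_one_lt (hR t ht)]
  simp only [Finset.sum_sub_distrib, Finset.sum_const, nsmul_eq_mul]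
  ring

end SmoothedHinge

section Screening

variable {d : ℕ} {ι : Type*} [DecidableEq ι] {γ lam : ℝ} {T L R : Finset ι}
  {H : ι → Matrix (Fin d) (Fin d) ℝ}

/-- The reduced objective `P̃_λ`. -/
noncomputable def screenedObj (γ lam : ℝ) (T L R : Finset ι) (H : ι → Matrix (Fin d) (Fin d) ℝ)
    (M : Matrix (Fin d) (Fin d) ℝ) : ℝ :=
  (∑ t ∈ T \ (L ∪ R), shinge γ (frob M (H t))) + lam / 2 * frobNorm M ^ 2 +
    (1 - γ / 2) * (L.card : ℝ) - frob M (∑ t ∈ L, H t)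

theorem screenedObj_eq_Pobj (hγ : 0 ≤ γ) (hLT : L ⊆ T) (hRT : R ⊆ T)
    {M : Matrix (Fin d) (Fin d) ℝ} (hL : ∀ t ∈ L, frob M (H t) < 1 - γ)
    (hR : ∀ t ∈ R, 1 < frob M (H t)) : screenedObj γ lam T L R H M = Pobj γ lam T H M := by
  rw [screenedObj, Pobj, sum_shinge_eq_of_screened hγ hLT hRT hL hR, frob_sum_right]
  ring

theorem Pobj_eventuallyEq_screenedObj (hγ : 0 ≤ γ) (hLT : L ⊆ T) (hRT : R ⊆ T)
    {M : Matrix (Fin d) (Fin d) ℝ} (hL : ∀ t ∈ L, frob M (H t) < 1 - γ)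
    (hR : ∀ t ∈ R, 1 < frob M (H t)) :
    Pobj γ lam T H =ᶠ[𝓝 M] screenedObj γ lam T L R H := by
  have hL' : ∀ᶠ N in 𝓝 M, ∀ t ∈ L, frob N (H t) < 1 - γ := (eventually_all_finset L).2
    fun t ht => (continuous_frob_left (H t)).continuousAt.eventually_lt continuousAt_const (hL t ht)
  have hR' : ∀ᶠ N in 𝓝 M, ∀ t ∈ R, 1 < frob N (H t) := (eventually_all_finset R).2
    fun t ht => continuousAt_const.eventually_lt (continuous_frob_left (H t)).continuousAt (hR t ht)
  filter_upwards [hL', hR'] with N hNL hNR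
  exact (screenedObj_eq_Pobj hγ hLT hRT hNL hNR).symm

theorem convexOn_screenedObj (hγ : 0 < γ) (hlam : 0 ≤ lam) :
    ConvexOn ℝ univ (screenedObj γ lam T L R H) := by
  have hloss : ConvexOn ℝ univ fun M => ∑ t ∈ T \ (L ∪ R), shinge γ (frob M (H t)) :=
    convexOn_finset_sum convex_univ fun t _ => (convexOn_shinge hγ).comp_linearMap (frobₗ (H t))
  exact ((hloss.add (convexOn_frobNorm_sq.smul (by positivity : 0 ≤ lam / 2))).add_const _).sub
    ((frobₗ _).concaveOn convex_univ)

end Screening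

theorem safe_screening_preserves_optimum_general {d : ℕ} {ι : Type*} [DecidableEq ι]
    (γ lam : ℝ) (hγ : 0 < γ) (hlam : 0 < lam)
    (T Lhat Rhat : Finset ι) (H : ι → Matrix (Fin d) (Fin d) ℝ)
    (Mstar : Matrix (Fin d) (Fin d) ℝ) (hMstar : Mstar.PosSemidef)
    (hopt : ∀ M : Matrix (Fin d) (Fin d) ℝ, M.PosSemidef →
      Pobj γ lam T H Mstar ≤ Pobj γ lam T H M)
    (hL : ∀ t ∈ Lhat, t ∈ T ∧ frob Mstar (H t) < 1 - γ)
    (hR : ∀ t ∈ Rhat, t ∈ T ∧ 1 < frob Mstar (H t)) :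
    let Ptilde : Matrix (Fin d) (Fin d) ℝ → ℝ := fun M =>
      (∑ t ∈ T \ (Lhat ∪ Rhat), shinge γ (frob M (H t))) + lam / 2 * frobNorm M ^ 2 +
        (1 - γ / 2) * (Lhat.card : ℝ) - frob M (∑ t ∈ Lhat, H t)
    (∀ M : Matrix (Fin d) (Fin d) ℝ, M.PosSemidef → Ptilde Mstar ≤ Ptilde M) ∧
      Ptilde Mstar = Pobj γ lam T H Mstar := by
  have hagree : Pobj γ lam T H =ᶠ[𝓝 Mstar] screenedObj γ lam T Lhat Rhat H :=
    Pobj_eventuallyEq_screenedObj hγ.le (fun t ht => (hL t ht).1) (fun t ht => (hR t ht).1)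
      (fun t ht => (hL t ht).2) (fun t ht => (hR t ht).2)
  have hmin : IsMinOn (screenedObj γ lam T Lhat Rhat H) {M | M.PosSemidef} Mstar :=
    .of_eventuallyEq_of_convexOn hMstar (fun M hM => hopt M hM) hagree
      ((convexOn_screenedObj hγ hlam.le).subset (subset_univ _) convex_setOf_posSemidef)
  exact ⟨fun M hM => hmin hM, hagree.eq_of_nhds.symm⟩

/-- Safe screening preserves the optimum. -/
theorem safe_screening_preserves_optimum {d : ℕ} {ι : Type*} [DecidableEq ι]
    (γ lam : ℝ) (hγ : 0 < γ) (hγ1 : γ ≤ 1) (hlam : 0 < lam)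
    (T Lhat Rhat : Finset ι) (H : ι → Matrix (Fin d) (Fin d) ℝ)
    (hH : ∀ t ∈ T, (H t).IsSymm)
    (Mstar : Matrix (Fin d) (Fin d) ℝ) (hMstar : Mstar.PosSemidef)
    (hopt : ∀ M : Matrix (Fin d) (Fin d) ℝ, M.PosSemidef →
      Pobj γ lam T H Mstar ≤ Pobj γ lam T H M)
    (hL : ∀ t ∈ Lhat, t ∈ T ∧ frob Mstar (H t) < 1 - γ)
    (hR : ∀ t ∈ Rhat, t ∈ T ∧ 1 < frob Mstar (H t)) :
    let Ptilde : Matrix (Fin d) (Fin d) ℝ → ℝ := fun M =>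
      (∑ t ∈ T \ (Lhat ∪ Rhat), shinge γ (frob M (H t))) + lam / 2 * frobNorm M ^ 2 +
        (1 - γ / 2) * (Lhat.card : ℝ) - frob M (∑ t ∈ Lhat, H t)
    (∀ M : Matrix (Fin d) (Fin d) ℝ, M.PosSemidef → Ptilde Mstar ≤ Ptilde M) ∧
      Ptilde Mstar = Pobj γ lam T H Mstar :=
  safe_screening_preserves_optimum_general γ lam hγ hlam T Lhat Rhat H Mstar hMstar hopt hL hR
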